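/- The monoid Ψ_1 := Ψ_0 + Φ^+ consists exactly of all λ ∈ ℤ^n such that the odd part (λ_1, λ_3, …) and the even part (λ_2, λ_4, …) are both dominance-nonnegative (i.e., all partial sums λ_1, λ_1+λ_3, …, and λ_2, λ_2+λ_4, …, are ≥ 0) and Σ_{i even} λ_i ≤ Σ_{i odd} λ_i. -/

import Mathlib

open Finset

/-- A permutation of `{1,…,n}` is parity preserving (`π(i) ≡ i mod 2`). -/
def ParityPerm {n : ℕ} (π : Equiv.Perm (Fin n)) : Prop :=
  ∀ i : Fin n, ((π i : ℕ)) % 2 = (i : ℕ) % 2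

/-- Partitions inside `ℤ^n`: weakly decreasing tuples of nonnegative integers. -/
def PartSet (n : ℕ) : Set (Fin n → ℤ) :=
  {lam | (∀ i j : Fin n, i ≤ j → lam j ≤ lam i) ∧ ∀ i, 0 ≤ lam i}

/-- `Ψ_0`: the smallest `W`-stable additive submonoid of `ℤ^n` containing all partitions. -/
noncomputable def Psi0 (n : ℕ) : AddSubmonoid (Fin n → ℤ) :=
  sInf {S | PartSet n ⊆ S ∧
    ∀ π : Equiv.Perm (Fin n), ParityPerm π → ∀ x ∈ S, (fun i => x (π i)) ∈ S}

/-- The simple-root monoid `Φ⁺`, generated by `ε_i − ε_{i+2}` (0-based here). -/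
noncomputable def PhiPlus (n : ℕ) : AddSubmonoid (Fin n → ℤ) :=
  AddSubmonoid.closure
    {v | ∃ i : ℕ, ∃ h : i + 2 < n,
      v = Pi.single (⟨i, by omega⟩ : Fin n) 1 - Pi.single (⟨i + 2, h⟩ : Fin n) 1}

/-! Indices are 0-based, as in the definitions above. Write `P i` for the partial sum of `λ` over
the indices `k ≤ i` with `k ≡ i (mod 2)`.

`Ψ₀ + Φ⁺` lies in the cone: the cone is a submonoid, a simple root `ε_i − ε_{i+2}` only moves mass
forward inside one parity class, and every element of `Ψ₀` is nonnegative with odd-indexed sum at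
most its even-indexed sum (for a partition pair `λ_{2j+1} ≤ λ_{2j}`; parity-preserving
permutations keep both sums).

Conversely, Abel summation inside each parity class gives
`λ = ∑_{i < n-2} P i • (ε_i − ε_{i+2}) + P (n-2) • ε_{n-2} + P (n-1) • ε_{n-1}`.
On the cone every `P i` is nonnegative, and `P (n-2)`, `P (n-1)` are the even and odd totals
(in some order), so the remainder is a parity-preserving permutation of the partition
`(a, b, 0, …, 0)` with `a ≥ b ≥ 0`. -/

section

variable {n : ℕ}

namespace ParityPerm

variable {π : Equiv.Perm (Fin n)}

lemma even_iff (hπ : ParityPerm π) (k : Fin n) : Even (π k : ℕ) ↔ Even (k : ℕ) := by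
  simp only [Nat.even_iff, hπ k]

lemma odd_iff (hπ : ParityPerm π) (k : Fin n) : Odd (π k : ℕ) ↔ Odd (k : ℕ) := by
  simp only [Nat.odd_iff, hπ k]

end ParityPerm

lemma parityPerm_swap {i j : Fin n} (h : (i : ℕ) % 2 = (j : ℕ) % 2) :
    ParityPerm (Equiv.swap i j) := by
  intro k
  rcases eq_or_ne k i with rfl | hki
  · simp [h]
  rcases eq_or_ne k j with rfl | hkj
  · simp [h]
  rw [Equiv.swap_apply_of_ne_of_ne hki hkj]

lemma Psi0_le {S : AddSubmonoid (Fin n → ℤ)} (hpart : PartSet n ⊆ S)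
    (hperm : ∀ π : Equiv.Perm (Fin n), ParityPerm π → ∀ x ∈ S, (fun i => x (π i)) ∈ S) :
    Psi0 n ≤ S :=
  sInf_le ⟨hpart, hperm⟩

lemma mem_Psi0_of_mem_PartSet {x : Fin n → ℤ} (hx : x ∈ PartSet n) : x ∈ Psi0 n :=
  AddSubmonoid.mem_sInf.2 fun _ hS => hS.1 hx

lemma comp_mem_Psi0 {π : Equiv.Perm (Fin n)} (hπ : ParityPerm π) {x : Fin n → ℤ}
    (hx : x ∈ Psi0 n) : (fun i => x (π i)) ∈ Psi0 n :=
  AddSubmonoid.mem_sInf.2 fun S hS => hS.2 π hπ x (AddSubmonoid.mem_sInf.1 hx S hS)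

lemma single_add_single_comp_equiv {α β : Type*} [DecidableEq α] [DecidableEq β] (σ : α ≃ β)
    (p q : β) (a b : ℤ) :
    (fun k => (Pi.single p a + Pi.single q b : β → ℤ) (σ k)) =
      Pi.single (σ.symm p) a + Pi.single (σ.symm q) b := by
  ext k
  simp only [Pi.add_apply, Pi.single_apply, Equiv.eq_symm_apply]

lemma single_add_single_mem_Psi0 {i j : Fin n} (hi : Even (i : ℕ)) (hj : Odd (j : ℕ))
    {a b : ℤ} (hb : 0 ≤ b) (hba : b ≤ a) : Pi.single i a + Pi.single j b ∈ Psi0 n := by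
  rw [Nat.even_iff] at hi
  rw [Nat.odd_iff] at hj
  have hn : 1 < n := by have := j.isLt; omega
  let e : Fin n := ⟨0, by omega⟩
  let o : Fin n := ⟨1, hn⟩
  have hpart : Pi.single e a + Pi.single o b ∈ PartSet n := by
    refine ⟨fun k l hkl => ?_, fun k => ?_⟩ <;>
      simp only [Pi.add_apply, Pi.single_apply, Fin.ext_iff, Fin.le_def, e, o] at * <;>
      split_ifs <;> omega
  have hio : i ≠ o := fun h => by simp only [Fin.ext_iff, o] at h; omega
  have hij : i ≠ j := fun h => by rw [h] at hi; omega
  have h₁ : Pi.single i a + Pi.single o b ∈ Psi0 n := by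
    have := comp_mem_Psi0 (parityPerm_swap (i := e) (j := i) (by simp [e, hi]))
      (mem_Psi0_of_mem_PartSet hpart)
    rwa [single_add_single_comp_equiv, Equiv.symm_swap, Equiv.swap_apply_left,
      Equiv.swap_apply_of_ne_of_ne (by simp [Fin.ext_iff, e, o]) hio.symm] at this
  have h₂ := comp_mem_Psi0 (parityPerm_swap (i := o) (j := j) (by simp [o, hj])) h₁
  rwa [single_add_single_comp_equiv, Equiv.symm_swap, Equiv.swap_apply_left,
    Equiv.swap_apply_of_ne_of_ne hio hij] at h₂

lemma sum_filter_odd_le_sum_filter_even {M : Type*} [AddCommMonoid M] [PartialOrder M]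
    [IsOrderedAddMonoid M] {x : Fin n → M} (hx : Antitone x) (hx₀ : 0 ≤ x) :
    ∑ k ∈ univ.filter (fun k : Fin n => Odd (k : ℕ)), x k ≤
      ∑ k ∈ univ.filter (fun k : Fin n => Even (k : ℕ)), x k := by
  let pred : Fin n → Fin n := fun k => ⟨k - 1, by omega⟩
  have hpred_inj : Set.InjOn pred (univ.filter (fun k : Fin n => Odd (k : ℕ))) := by
    intro k hk l hl hkl
    simp only [coe_filter, mem_univ, true_and, Set.mem_ofPred_eq, Nat.odd_iff] at hk hl
    simp only [pred, Fin.mk.injEq] at hkl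
    omega
  calc ∑ k ∈ univ.filter (fun k : Fin n => Odd (k : ℕ)), x k
      ≤ ∑ k ∈ univ.filter (fun k : Fin n => Odd (k : ℕ)), x (pred k) :=
        sum_le_sum fun k _ => hx (Nat.sub_le _ _)
    _ = ∑ k ∈ (univ.filter (fun k : Fin n => Odd (k : ℕ))).image pred, x k :=
        (sum_image hpred_inj).symm
    _ ≤ ∑ k ∈ univ.filter (fun k : Fin n => Even (k : ℕ)), x k := by
        refine sum_le_sum_of_subset_of_nonneg (fun k hk => ?_) fun k _ _ => hx₀ k
        simp only [mem_image, mem_filter, mem_univ, true_and, Nat.odd_iff, Nat.even_iff] at hk ⊢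
        obtain ⟨l, hl, rfl⟩ := hk
        simp only [pred]
        omega

def evenHeavyNonneg (n : ℕ) : AddSubmonoid (Fin n → ℤ) where
  carrier := {x | 0 ≤ x ∧
    ∑ k ∈ univ.filter (fun k : Fin n => Odd (k : ℕ)), x k ≤
      ∑ k ∈ univ.filter (fun k : Fin n => Even (k : ℕ)), x k}
  zero_mem' := by simp
  add_mem' := by
    rintro x y ⟨hx₀, hx⟩ ⟨hy₀, hy⟩
    refine ⟨add_nonneg hx₀ hy₀, ?_⟩
    simp only [Pi.add_apply, sum_add_distrib]
    exact add_le_add hx hy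

lemma Psi0_le_evenHeavyNonneg : Psi0 n ≤ evenHeavyNonneg n := by
  refine Psi0_le (fun x ⟨hx, hx₀⟩ => ⟨hx₀, sum_filter_odd_le_sum_filter_even
    (fun k l hkl => hx k l hkl) hx₀⟩) fun π hπ x ⟨hx₀, hx⟩ => ⟨fun k => hx₀ (π k), ?_⟩
  rwa [sum_equiv π (t := univ.filter (fun k : Fin n => Odd (k : ℕ)))
      (fun k => by simp [hπ.odd_iff]) (fun _ _ => rfl),
    sum_equiv π (t := univ.filter (fun k : Fin n => Even (k : ℕ)))
      (fun k => by simp [hπ.even_iff]) (fun _ _ => rfl)]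

def dominanceCone (n : ℕ) : AddSubmonoid (Fin n → ℤ) where
  carrier := {lam | (∀ m : Fin n,
      0 ≤ ∑ k ∈ Finset.univ.filter (fun k : Fin n => k ≤ m ∧ Even (k : ℕ)), lam k) ∧
    (∀ m : Fin n,
      0 ≤ ∑ k ∈ Finset.univ.filter (fun k : Fin n => k ≤ m ∧ Odd (k : ℕ)), lam k) ∧
    ∑ i ∈ Finset.univ.filter (fun i : Fin n => Odd (i : ℕ)), lam i ≤
      ∑ i ∈ Finset.univ.filter (fun i : Fin n => Even (i : ℕ)), lam i}
  zero_mem' := by simp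
  add_mem' := by
    rintro x y ⟨hx₁, hx₂, hx₃⟩ ⟨hy₁, hy₂, hy₃⟩
    refine ⟨fun m => ?_, fun m => ?_, ?_⟩ <;> simp only [Pi.add_apply, sum_add_distrib]
    exacts [add_nonneg (hx₁ m) (hy₁ m), add_nonneg (hx₂ m) (hy₂ m), add_le_add hx₃ hy₃]

lemma evenHeavyNonneg_le_dominanceCone : evenHeavyNonneg n ≤ dominanceCone n :=
  fun _ ⟨hx₀, hx⟩ => ⟨fun _ => sum_nonneg fun k _ => hx₀ k,
    fun _ => sum_nonneg fun k _ => hx₀ k, hx⟩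

lemma sum_single_sub_single {α : Type*} [DecidableEq α] (s : Finset α) (p q : α) :
    ∑ k ∈ s, (Pi.single p 1 - Pi.single q 1 : α → ℤ) k =
      (if p ∈ s then 1 else 0) - (if q ∈ s then 1 else 0) := by
  simp only [Pi.sub_apply, sum_sub_distrib, sum_pi_single']

lemma PhiPlus_le_dominanceCone : PhiPlus n ≤ dominanceCone n := by
  refine AddSubmonoid.closure_le.2 ?_
  rintro v ⟨i, h, rfl⟩
  refine ⟨fun m => ?_, fun m => ?_, ?_⟩ <;>
    simp only [sum_single_sub_single, mem_filter, mem_univ, true_and, Fin.le_def,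
      Nat.even_iff, Nat.odd_iff] <;>
    split_ifs <;> omega

def paritySum (lam : Fin n → ℤ) (i : ℕ) : ℤ :=
  ∑ k ∈ univ.filter (fun k : Fin n => (k : ℕ) ≤ i ∧ (k : ℕ) % 2 = i % 2), lam k

lemma paritySum_eq_add (lam : Fin n → ℤ) (k : Fin n) :
    paritySum lam k = lam k + if 2 ≤ (k : ℕ) then paritySum lam (k - 2) else 0 := by
  unfold paritySum
  split_ifs with hk
  · rw [← sum_insert (a := k) (by simp only [mem_filter, mem_univ, true_and]; omega)]
    congr 1
    ext l
    simp only [mem_filter, mem_univ, true_and, mem_insert, Fin.ext_iff]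
    omega
  · rw [add_zero, ← sum_singleton lam k]
    congr 1
    ext l
    simp only [mem_filter, mem_univ, true_and, mem_singleton, Fin.ext_iff]
    omega

lemma paritySum_of_even (lam : Fin n → ℤ) {m : Fin n} (hm : Even (m : ℕ)) :
    paritySum lam m = ∑ k ∈ univ.filter (fun k : Fin n => k ≤ m ∧ Even (k : ℕ)), lam k := by
  rw [Nat.even_iff] at hm
  refine sum_congr (ext fun k => ?_) fun _ _ => rfl
  simp only [mem_filter, mem_univ, true_and, Fin.le_def, Nat.even_iff]
  omega

lemma paritySum_of_odd (lam : Fin n → ℤ) {m : Fin n} (hm : Odd (m : ℕ)) :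
    paritySum lam m = ∑ k ∈ univ.filter (fun k : Fin n => k ≤ m ∧ Odd (k : ℕ)), lam k := by
  rw [Nat.odd_iff] at hm
  refine sum_congr (ext fun k => ?_) fun _ _ => rfl
  simp only [mem_filter, mem_univ, true_and, Fin.le_def, Nat.odd_iff]
  omega

lemma sum_filter_even_eq_paritySum (lam : Fin n → ℤ) {i : ℕ} (hi : Even i) (hni : n ≤ i + 2) :
    ∑ k ∈ univ.filter (fun k : Fin n => Even (k : ℕ)), lam k = paritySum lam i := by
  rw [Nat.even_iff] at hi
  refine sum_congr (ext fun k => ?_) fun _ _ => rfl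
  simp only [mem_filter, mem_univ, true_and, Nat.even_iff]
  omega

lemma sum_filter_odd_eq_paritySum (lam : Fin n → ℤ) {i : ℕ} (hi : Odd i) (hni : n ≤ i + 2) :
    ∑ k ∈ univ.filter (fun k : Fin n => Odd (k : ℕ)), lam k = paritySum lam i := by
  rw [Nat.odd_iff] at hi
  refine sum_congr (ext fun k => ?_) fun _ _ => rfl
  simp only [mem_filter, mem_univ, true_and, Nat.odd_iff]
  omega

lemma paritySum_nonneg {lam : Fin n → ℤ} (hlam : lam ∈ dominanceCone n) (m : Fin n) :
    0 ≤ paritySum lam m := by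
  rcases Nat.even_or_odd m with hm | hm
  · rw [paritySum_of_even lam hm]
    exact hlam.1 m
  · rw [paritySum_of_odd lam hm]
    exact hlam.2.1 m

def simpleRoot (n i : ℕ) : Fin n → ℤ :=
  fun k => (Pi.single i 1 - Pi.single (i + 2) 1 : ℕ → ℤ) k

lemma simpleRoot_mem_PhiPlus {i : ℕ} (h : i + 2 < n) : simpleRoot n i ∈ PhiPlus n :=
  AddSubmonoid.subset_closure ⟨i, h, by ext k; simp [simpleRoot, Pi.single_apply, Fin.ext_iff]⟩

lemma sum_mul_single_sub_single_apply (c : ℕ → ℤ) (m k : ℕ) :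
    ∑ i ∈ range m, c i * (Pi.single i 1 - Pi.single (i + 2) 1 : ℕ → ℤ) k =
      (if k < m then c k else 0) - if 2 ≤ k ∧ k < m + 2 then c (k - 2) else 0 := by
  simp only [Pi.sub_apply, Pi.single_apply, mul_sub, mul_ite, mul_one, mul_zero,
    sum_sub_distrib, sum_ite_eq, mem_range]
  congr 1
  obtain hk | ⟨j, rfl⟩ : k < 2 ∨ ∃ j, k = j + 2 := by
    rcases Nat.lt_or_ge k 2 with hk | hk
    exacts [.inl hk, .inr ⟨k - 2, by omega⟩]
  · rw [if_neg (by omega)]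
    exact sum_eq_zero fun i _ => if_neg (by omega)
  · simp only [add_left_inj, sum_ite_eq, mem_range, Nat.add_sub_cancel]
    congr 1
    simp

lemma eq_add_sum_paritySum_smul_simpleRoot (lam : Fin n → ℤ) :
    lam = (fun k : Fin n => if n - 2 ≤ (k : ℕ) then paritySum lam k else 0) +
      ∑ i ∈ range (n - 2), paritySum lam i • simpleRoot n i := by
  ext k
  have hk := k.isLt
  have := paritySum_eq_add lam k
  simp only [Pi.add_apply, Finset.sum_apply, Pi.smul_apply, smul_eq_mul, simpleRoot,
    sum_mul_single_sub_single_apply]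
  split_ifs <;> omega

lemma last_paritySums_mem_Psi0 (hn : 2 ≤ n) {lam : Fin n → ℤ} (hlam : lam ∈ dominanceCone n) :
    (fun k : Fin n => if n - 2 ≤ (k : ℕ) then paritySum lam k else 0) ∈ Psi0 n := by
  -- the largest even and the largest odd index below `n`
  let e : Fin n := ⟨n - 2 + n % 2, by omega⟩
  let o : Fin n := ⟨n - 1 - n % 2, by omega⟩
  have he : Even (e : ℕ) := Nat.even_iff.2 (by simp only [e]; omega)
  have ho : Odd (o : ℕ) := Nat.odd_iff.2 (by simp only [o]; omega)
  have htot : paritySum lam o ≤ paritySum lam e := by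
    rw [← sum_filter_odd_eq_paritySum lam ho (by simp only [o]; omega),
      ← sum_filter_even_eq_paritySum lam he (by simp only [e]; omega)]
    exact hlam.2.2
  have heo : e ≠ o := fun h => (Nat.not_even_iff_odd.2 ho) (h ▸ he)
  convert single_add_single_mem_Psi0 he ho (paritySum_nonneg hlam o) htot using 1
  ext k
  rw [Pi.add_apply]
  rcases eq_or_ne k e with rfl | hke
  · rw [Pi.single_eq_same, Pi.single_eq_of_ne heo, add_zero, if_pos (by simp only [e]; omega)]
  rcases eq_or_ne k o with rfl | hko
  · rw [Pi.single_eq_of_ne heo.symm, Pi.single_eq_same, zero_add,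
      if_pos (by simp only [o]; omega)]
  rw [Pi.single_eq_of_ne hke, Pi.single_eq_of_ne hko, add_zero]
  simp only [ne_eq, Fin.ext_iff, e, o] at hke hko
  rw [if_neg (by omega)]

lemma dominanceCone_le (hn : 2 ≤ n) : dominanceCone n ≤ Psi0 n ⊔ PhiPlus n := by
  intro lam hlam
  rw [eq_add_sum_paritySum_smul_simpleRoot lam]
  refine add_mem (AddSubmonoid.mem_sup_left (last_paritySums_mem_Psi0 hn hlam))
    (AddSubmonoid.mem_sup_right (sum_mem fun i hi => ?_))
  rw [mem_range] at hi
  obtain ⟨c, hc⟩ := Int.eq_ofNat_of_zero_le (paritySum_nonneg hlam ⟨i, by omega⟩)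
  rw [hc, natCast_zsmul]
  exact nsmul_mem (simpleRoot_mem_PhiPlus (by omega)) c

end

/-- `Ψ_1 = Ψ_0 + Φ⁺` consists of all `λ ∈ ℤ^n` such that all initial partial sums of the
odd part `(λ_1, λ_3, …)` and of the even part `(λ_2, λ_4, …)` are nonnegative, and
`∑_{i even} λ_i ≤ ∑_{i odd} λ_i` (1-based parity; 1-based odd is 0-based even). -/
theorem Psi1_eq_carrier (n : ℕ) (hn : 2 ≤ n) :
    ((Psi0 n ⊔ PhiPlus n : AddSubmonoid (Fin n → ℤ)) : Set (Fin n → ℤ)) =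
      {lam | (∀ m : Fin n,
          0 ≤ ∑ k ∈ Finset.univ.filter (fun k : Fin n => k ≤ m ∧ Even (k : ℕ)), lam k) ∧
        (∀ m : Fin n,
          0 ≤ ∑ k ∈ Finset.univ.filter (fun k : Fin n => k ≤ m ∧ Odd (k : ℕ)), lam k) ∧
        ∑ i ∈ Finset.univ.filter (fun i : Fin n => Odd (i : ℕ)), lam i ≤
          ∑ i ∈ Finset.univ.filter (fun i : Fin n => Even (i : ℕ)), lam i} :=
  congrArg SetLike.coe <| le_antisymm
    (sup_le (Psi0_le_evenHeavyNonneg.trans evenHeavyNonneg_le_dominanceCone)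
      PhiPlus_le_dominanceCone)
    (dominanceCone_le hn)
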